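/- Let P ∈ ℝ[X] be a nonzero polynomial. An element ξ ∈ ℝ* is a pseudozero of P (i.e., a root of some *ℝ-deformation of P) if and only if ξ is finite and st ξ is a root of P. Equivalently, the set of pseudozeros of P is the union of the halos h(u) = {u + δ : δ infinitesimal} over all real roots u of P. -/

import Mathlib

open Hyperreal Polynomial

/-- The coercion `ℝ → ℝ*` as a ring homomorphism. -/
noncomputable def realToHyper : ℝ →+* ℝ* :=
  (Filter.Germ.coeRingHom _).comp (Pi.constRingHom ℕ ℝ)

/-!
The finite elements of an ordered field `K ⊇ ℝ` form a subring on which the standard part is a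
ring homomorphism to `ℝ`, and the coefficients of a deformation `Q` of `P` are finite with
standard parts the coefficients of `P`. Evaluation commutes with ring homomorphisms, so
`st (Q ξ) = P (st ξ)` for finite `ξ`; this gives one inclusion once roots of `Q` are known to be
finite. They are: if `ξ` were infinite, the infinitesimal `ξ⁻¹` would be a root of the reversed
polynomial of `Q`, whose value there has standard part `P.reverse 0 = P.leadingCoeff ≠ 0`.
Conversely, if `st ξ` is a root of `P` then `P ξ` is infinitesimal and `ξ` is a root of the
deformation `P - P ξ`.
-/

open ArchimedeanClass

section

variable {K : Type*} [LinearOrder K] [Field K] [IsOrderedRing K]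

namespace ArchimedeanClass

namespace FiniteElement

noncomputable def val : FiniteElement K →+* K :=
  (addValuation K).toValuation.valuationSubring.subtype

noncomputable def stdPartHom : FiniteElement K →+* ℝ :=
  (Classical.ofNonempty : FiniteResidueField K →+*o ℝ).toRingHom.comp
    (FiniteResidueField.mk : FiniteElement K →+*o _).toRingHom

theorem stdPartHom_apply (x : FiniteElement K) : stdPartHom x = stdPart (val x) :=
  (stdPart_of_mk_nonneg _ x.2).symm

theorem range_val : Set.range (val : FiniteElement K →+* K) = {x | 0 ≤ mk x} := by
  ext x
  exact ⟨fun ⟨y, hy⟩ => hy ▸ y.2, fun hx => ⟨⟨x, hx⟩, rfl⟩⟩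

end FiniteElement

open FiniteElement

theorem mk_sub_map_pos_iff (f : ℝ →+*o K) {x : K} {r : ℝ} :
    0 < mk (x - f r) ↔ 0 ≤ mk x ∧ stdPart x = r := by
  refine ⟨fun h => ?_, fun ⟨hx, hr⟩ => (mk_sub_pos_iff f hx).2 hr⟩
  have hx : 0 ≤ mk x := by
    simpa using (le_min h.le (mk_map_nonneg_of_archimedean f r)).trans (min_le_mk_add _ _)
  exact ⟨hx, (mk_sub_pos_iff f hx).1 h⟩

theorem mk_sub_map_eval_pos (f : ℝ →+*o K) {P : ℝ[X]} {Q : K[X]}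
    (hQ : ∀ i, 0 < mk (Q.coeff i - f (P.coeff i))) {x : K} {r : ℝ} (hx : 0 < mk (x - f r)) :
    0 < mk (Q.eval x - f (P.eval r)) := by
  simp only [mk_sub_map_pos_iff f] at hQ hx ⊢
  obtain ⟨Q, rfl⟩ : ∃ Q' : (FiniteElement K)[X], Q'.map val = Q :=
    (lifts_iff_coeff_lifts Q).2 fun i => by simpa [range_val] using (hQ i).1
  have hP : Q.map stdPartHom = P := by
    ext i
    rw [coeff_map, stdPartHom_apply, ← (hQ i).2, coeff_map]
  obtain ⟨hx, rfl⟩ := hx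
  obtain ⟨x, rfl⟩ : ∃ x' : FiniteElement K, val x' = x := ⟨FiniteElement.mk x hx, rfl⟩
  rw [eval_map_apply, ← stdPartHom_apply, ← eval_map_apply stdPartHom, hP, stdPartHom_apply]
  exact ⟨(Q.eval x).2, rfl⟩

end ArchimedeanClass

namespace Polynomial

/-- The `*ℝ`-deformations of the paper, over any ordered field `K ⊇ ℝ`; `0 < mk x` says that `x`
is infinitesimal. -/
def IsDeformation (f : ℝ →+*o K) (P : ℝ[X]) (Q : K[X]) : Prop :=
  Q.natDegree = P.natDegree ∧ ∀ i, 0 < mk (Q.coeff i - f (P.coeff i))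

theorem IsDeformation.mk_nonneg_of_eval_eq_zero {f : ℝ →+*o K} {P : ℝ[X]} {Q : K[X]}
    (hQ : IsDeformation f P Q) (hP : P ≠ 0) {ξ : K} (hξ : Q.eval ξ = 0) : 0 ≤ mk ξ := by
  obtain ⟨hdeg, hcoeff⟩ := hQ
  by_contra! hinf
  have hξ0 : ξ ≠ 0 := by
    rintro rfl
    simp at hinf
  have hrev : Q.reverse.eval ξ⁻¹ = 0 := by
    let := invertibleOfNonzero hξ0
    have h := (eval₂_reverse_eq_zero_iff (RingHom.id K) ξ Q).2 hξ
    rwa [invOf_eq_inv] at h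
  have hcoeff_rev : ∀ i, 0 < mk (Q.reverse.coeff i - f (P.reverse.coeff i)) := by
    intro i
    rw [coeff_reverse, coeff_reverse, hdeg]
    exact hcoeff _
  have h := mk_sub_map_eval_pos f hcoeff_rev (x := ξ⁻¹) (r := 0) (by simpa using Or.inl hinf)
  rw [hrev, ← coeff_zero_eq_eval_zero, coeff_zero_reverse, mk_sub_map_pos_iff f,
    stdPart_zero] at h
  exact leadingCoeff_ne_zero.2 hP h.2.symm

theorem exists_isDeformation_eval_eq_zero_iff (f : ℝ →+*o K) {P : ℝ[X]} (hP : P ≠ 0) (ξ : K) :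
    (∃ Q, IsDeformation f P Q ∧ Q.eval ξ = 0) ↔ 0 ≤ mk ξ ∧ P.eval (stdPart ξ) = 0 := by
  constructor
  · rintro ⟨Q, hQ, hξ⟩
    have hfin := hQ.mk_nonneg_of_eval_eq_zero hP hξ
    have h := mk_sub_map_eval_pos f hQ.2 (mk_sub_stdPart_pos f hfin)
    rw [hξ, mk_sub_map_pos_iff f, stdPart_zero] at h
    exact ⟨hfin, h.2.symm⟩
  · rintro ⟨hfin, hroot⟩
    set e := (P.map (f : ℝ →+* K)).eval ξ
    have he : 0 < mk e := by
      have := mk_sub_map_eval_pos f (P := P) (Q := P.map f) (by simp) (mk_sub_stdPart_pos f hfin)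
      rwa [hroot, map_zero, sub_zero] at this
    refine ⟨P.map f - C e, ⟨?_, fun i => ?_⟩, by simp [e]⟩
    · rw [natDegree_sub_C, natDegree_map]
    · have hcoeff : (P.map f - C e).coeff i - f (P.coeff i) = -(C e).coeff i := by
        rw [coeff_sub, coeff_map]
        exact sub_sub_cancel_left _ _
      rw [hcoeff, mk_neg, coeff_C]
      split_ifs <;> simp [he]

end Polynomial

end

set_option linter.deprecated false

/-- Pseudozeros of a nonzero real polynomial `P`: an element `ξ ∈ ℝ*` is a root of
some `*ℝ`-deformation of `P` iff `ξ` is finite and `st ξ` is a root of `P`; i.e. the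
set of pseudozeros is the union of the halos of the real roots of `P`. -/
theorem pseudozeros_eq_halos_of_roots (P : Polynomial ℝ) (hP : P ≠ 0) (ξ : ℝ*) :
    (∃ Q : Polynomial ℝ*, Q.natDegree = P.natDegree ∧
        (∀ i, Infinitesimal ((Q - P.map realToHyper).coeff i)) ∧ Q.eval ξ = 0) ↔
      (¬Infinite ξ ∧ P.eval (st ξ) = 0) := by
  have hdef (Q : ℝ*[X]) : (∀ i, Infinitesimal ((Q - P.map realToHyper).coeff i)) ↔
      ∀ i, 0 < mk (Q.coeff i - coeRingHom (P.coeff i)) :=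
    forall_congr' fun i => by
      rw [coeff_sub, coeff_map]
      exact infinitesimal_iff
  simpa only [IsDeformation, hdef, and_assoc, infinite_iff, not_lt, st_eq] using
    exists_isDeformation_eval_eq_zero_iff coeRingHom hP ξ
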